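/- For t > 0 and (x,y) ∈ ℝ² with x + y²/(4t) < 0, define φ(t,x,y) = −(x + y²/(4t))²/(4t). Then at every such point, ∂_x φ > 0 and φ solves the infinite-depth eikonal equation ∂_t φ − (∂_x φ)·|∂_x φ| + (∂_y φ)²/(∂_x φ) = 0. -/

import Mathlib

/-- The infinite-depth eikonal phase `φ(t,x,y) = −(x + y²/(4t))²/(4t)`. -/
noncomputable def eikPhaseInf (p : ℝ × ℝ × ℝ) : ℝ :=
  -(p.2.1 + p.2.2 ^ 2 / (4 * p.1)) ^ 2 / (4 * p.1)

theorem eikonal_equation_infinite_depth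
    (t x y : ℝ) (ht : 0 < t) (hz : x + y ^ 2 / (4 * t) < 0) :
    0 < fderiv ℝ eikPhaseInf (t, x, y) (0, 1, 0) ∧
    fderiv ℝ eikPhaseInf (t, x, y) (1, 0, 0)
        - fderiv ℝ eikPhaseInf (t, x, y) (0, 1, 0) *
            |fderiv ℝ eikPhaseInf (t, x, y) (0, 1, 0)|
        + (fderiv ℝ eikPhaseInf (t, x, y) (0, 0, 1)) ^ 2 /
            fderiv ℝ eikPhaseInf (t, x, y) (0, 1, 0) = 0 := by
  have ht' : (0:ℝ) < 4 * t := by positivity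
  have ht4 : (4 * t) ≠ 0 := ne_of_gt ht'
  -- differentiability of the phase at (t,x,y)
  have ht4' : (4 * ((t, x, y) : ℝ × ℝ × ℝ).1) ≠ 0 := by simpa using ht4
  have d1 : DifferentiableAt ℝ (fun p : ℝ × ℝ × ℝ => p.1) (t, x, y) := differentiableAt_fst
  have d2 : DifferentiableAt ℝ (fun p : ℝ × ℝ × ℝ => p.2.1) (t, x, y) :=
    differentiableAt_fst.comp _ differentiableAt_snd
  have d3 : DifferentiableAt ℝ (fun p : ℝ × ℝ × ℝ => p.2.2) (t, x, y) :=
    differentiableAt_snd.comp _ differentiableAt_snd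
  have dinv : DifferentiableAt ℝ (fun p : ℝ × ℝ × ℝ => (4 * p.1)⁻¹) (t, x, y) :=
    (d1.const_mul 4).inv ht4'
  have hdiff : DifferentiableAt ℝ eikPhaseInf (t, x, y) := by
    have h' : DifferentiableAt ℝ
        (fun p : ℝ × ℝ × ℝ => -(p.2.1 + p.2.2 ^ 2 * (4 * p.1)⁻¹) ^ 2 * (4 * p.1)⁻¹) (t, x, y) :=
      (((d2.add ((d3.pow 2).mul dinv)).pow 2).neg).mul dinv
    have heq : eikPhaseInf = fun p : ℝ × ℝ × ℝ =>
        -(p.2.1 + p.2.2 ^ 2 * (4 * p.1)⁻¹) ^ 2 * (4 * p.1)⁻¹ := by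
      funext p; simp [eikPhaseInf, div_eq_mul_inv]
    rw [heq]; exact h'
  have hF := hdiff.hasFDerivAt
  -- directional derivatives via 1D derivatives along lines
  have line : ∀ v : ℝ × ℝ × ℝ, HasDerivAt (fun s : ℝ => ((t, x, y) : ℝ × ℝ × ℝ) + s • v) v 0 := by
    intro v
    simpa using ((hasDerivAt_id (0:ℝ)).smul_const v).const_add ((t, x, y) : ℝ × ℝ × ℝ)
  have key : ∀ v : ℝ × ℝ × ℝ, HasDerivAt (fun s : ℝ => eikPhaseInf ((t, x, y) + s • v))
      (fderiv ℝ eikPhaseInf (t, x, y) v) 0 := by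
    intro v
    have hF' : HasFDerivAt eikPhaseInf (fderiv ℝ eikPhaseInf (t, x, y)) ((t, x, y) + (0:ℝ) • v) := by
      simpa using hF
    have h := hF'.comp_hasDerivAt 0 (line v)
    exact h
  set z : ℝ := x + y ^ 2 / (4 * t) with hzdef
  -- direction (0,1,0)
  have e2 : fderiv ℝ eikPhaseInf (t, x, y) (0, 1, 0) = -z / (2 * t) := by
    refine HasDerivAt.unique (key (0,1,0)) ?_
    have hb : HasDerivAt (fun s : ℝ => x + s + y ^ 2 / (4 * t)) 1 0 := by
      simpa using ((hasDerivAt_id (0:ℝ)).const_add x).add_const (y ^ 2 / (4 * t))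
    have h := ((hb.pow 2).neg).div_const (4 * t)
    have hfun : (fun s : ℝ => eikPhaseInf ((t, x, y) + s • ((0:ℝ),(1:ℝ),(0:ℝ))))
        = fun s : ℝ => -(x + s + y ^ 2 / (4 * t)) ^ 2 / (4 * t) := by
      funext s
      simp [eikPhaseInf, Prod.smul_def]
    rw [hfun]
    refine h.congr_deriv ?_
    rw [hzdef]
    field_simp [ht.ne']
    linear_combination (-(y^2 + 4*t*x)) * mul_inv_cancel₀ ht.ne'
  -- direction (0,0,1)
  have e3 : fderiv ℝ eikPhaseInf (t, x, y) (0, 0, 1) = -z * y / (4 * t ^ 2) := by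
    refine HasDerivAt.unique (key (0,0,1)) ?_
    have hy : HasDerivAt (fun s : ℝ => y + s) 1 0 := by
      simpa using (hasDerivAt_id (0:ℝ)).const_add y
    have hb : HasDerivAt (fun s : ℝ => x + (y + s) ^ 2 / (4 * t))
        ((2 * (y + 0) ^ 1 * 1) / (4 * t)) 0 := by
      simpa using (HasDerivAt.const_add x ((hy.pow 2).div_const (4 * t)))
    have h := ((hb.pow 2).neg).div_const (4 * t)
    have hfun : (fun s : ℝ => eikPhaseInf ((t, x, y) + s • ((0:ℝ),(0:ℝ),(1:ℝ))))
        = fun s : ℝ => -(x + (y + s) ^ 2 / (4 * t)) ^ 2 / (4 * t) := by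
      funext s
      simp [eikPhaseInf, Prod.smul_def]
    rw [hfun]
    refine h.congr_deriv ?_
    rw [hzdef]
    field_simp [ht.ne']
    linear_combination (-(4*y*t*x + y^3)) * mul_inv_cancel₀ ht.ne'
  -- direction (1,0,0)
  have e1 : fderiv ℝ eikPhaseInf (t, x, y) (1, 0, 0)
      = z * y ^ 2 / (8 * t ^ 3) + z ^ 2 / (4 * t ^ 2) := by
    refine HasDerivAt.unique (key (1,0,0)) ?_
    have hden : HasDerivAt (fun s : ℝ => 4 * (t + s)) 4 0 := by
      simpa using ((hasDerivAt_id (0:ℝ)).const_add t).const_mul 4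
    have hden0 : (4 * (t + 0)) ≠ 0 := by simpa using ht4
    have hb : HasDerivAt (fun s : ℝ => x + y ^ 2 / (4 * (t + s)))
        ((0 * (4 * (t + 0)) - y ^ 2 * 4) / (4 * (t + 0)) ^ 2) 0 :=
      HasDerivAt.const_add x (((hasDerivAt_const (0:ℝ) (y ^ 2))).div hden hden0)
    have h := (((hb.pow 2).neg).div hden hden0)
    have hfun : (fun s : ℝ => eikPhaseInf ((t, x, y) + s • ((1:ℝ),(0:ℝ),(0:ℝ))))
        = fun s : ℝ => -(x + y ^ 2 / (4 * (t + s))) ^ 2 / (4 * (t + s)) := by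
      funext s
      simp [eikPhaseInf, Prod.smul_def]
    rw [hfun]
    refine h.congr_deriv ?_
    rw [hzdef]
    simp only [Pi.neg_apply, Pi.pow_apply]
    field_simp [ht.ne']
    linear_combination (16*t^4*y^4 + 64*t^5*x*y^2) * mul_inv_cancel₀ ht.ne'
  rw [e1, e2, e3]
  have hzneg : z < 0 := hz
  have hpos : 0 < -z / (2 * t) := by
    apply div_pos (by linarith) (by linarith)
  refine ⟨hpos, ?_⟩
  rw [abs_of_pos hpos]
  have h2t : (2 * t) ≠ 0 := by positivity
  have hzne0 : z ≠ 0 := ne_of_lt hzneg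
  clear_value z
  field_simp
  ring
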